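/- arXiv:1907.10179 — 4 statements merged into one kernel-verified Lean document; each statement's English description precedes it below -/
import Mathlib

section
/- Suppose F is proper convex, (x*, y*) is a KKT pair for minimizing F subject to √L x = 0, and ρ > ‖y*‖. If a point x̂ satisfies F(x̂) − F(x*) + ρ‖√L x̂‖ ≤ B for some B ≥ 0, then ‖√L x̂‖ ≤ B/(ρ − ‖y*‖) and −‖y*‖·B/(ρ − ‖y*‖) ≤ F(x̂) − F(x*) ≤ B. -/
/-!
The KKT multiplier gives the Lagrangian lower bound `F x ≥ F x* - ⟨y*, √L x⟩` for every `x`, and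
Cauchy–Schwarz turns it into `F x̂ - F x* ≥ -‖y*‖ ‖√L x̂‖`. Adding this to the hypothesis
`F x̂ - F x* + ρ ‖√L x̂‖ ≤ B` leaves `(ρ - ‖y*‖) ‖√L x̂‖ ≤ B`, which bounds the infeasibility, and
feeding that bound back into the two inequalities bounds the objective gap from both sides.
-/

open Matrix

lemma Matrix.dotProduct_le_sqrt_mul_sqrt {ι : Type*} [Fintype ι] (v w : ι → ℝ) :
    v ⬝ᵥ w ≤ √(v ⬝ᵥ v) * √(w ⬝ᵥ w) := by
  simpa only [dotProduct, sq] using Real.sum_mul_le_sqrt_mul_sqrt Finset.univ v w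

lemma Matrix.IsSymm.mulVec_dotProduct {ι R : Type*} [Fintype ι] [CommSemiring R]
    {A : Matrix ι ι R} (hA : A.IsSymm) (x y : ι → R) :
    (A *ᵥ x) ⬝ᵥ y = x ⬝ᵥ (A *ᵥ y) := by
  rw [dotProduct_mulVec, ← mulVec_transpose, hA.eq]

lemma dotProduct_sub_eq_neg_dotProduct_mulVec {ι : Type*} [Fintype ι] {S : Matrix ι ι ℝ}
    (hS : S.IsSymm) {g xs ys : ι → ℝ} (hg : g + S *ᵥ ys = 0) (hfeas : S *ᵥ xs = 0)
    (x : ι → ℝ) :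
    g ⬝ᵥ (x - xs) = -(ys ⬝ᵥ (S *ᵥ x)) := by
  rw [eq_neg_of_add_eq_zero_left hg, neg_dotProduct, hS.mulVec_dotProduct, mulVec_sub, hfeas,
    sub_zero]

lemma EReal.ne_top_of_sub_add_coe_le_coe {a b : EReal} (hb : b ≠ ⊤) {c B : ℝ}
    (h : a - b + c ≤ (B : EReal)) : a ≠ ⊤ := by
  rintro rfl
  rw [EReal.top_sub hb, EReal.top_add_coe] at h
  exact EReal.coe_ne_top B (top_le_iff.mp h)

/-- The exact-penalty estimate in real numbers: `t` is the infeasibility `‖√L x̂‖`, `s = ‖y*‖`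
and `d = F x̂ - F x*`. -/
lemma exactPenalty_bounds {s t d ρ B : ℝ} (hs : 0 ≤ s) (ht : 0 ≤ t) (hρ : s < ρ)
    (hlower : -(s * t) ≤ d) (hbound : d + ρ * t ≤ B) :
    t ≤ B / (ρ - s) ∧ -(s * B / (ρ - s)) ≤ d ∧ d ≤ B := by
  have hgap : 0 < ρ - s := sub_pos.mpr hρ
  have ht_le : t ≤ B / (ρ - s) := (le_div_iff₀ hgap).mpr (by linarith)
  refine ⟨ht_le, ?_, by nlinarith⟩
  calc -(s * B / (ρ - s)) = -(s * (B / (ρ - s))) := by ring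
    _ ≤ -(s * t) := neg_le_neg (mul_le_mul_of_nonneg_left ht_le hs)
    _ ≤ d := hlower

theorem stmt_6_general {n : ℕ} (sL : Matrix (Fin n) (Fin n) ℝ)
    (hsL : sL.PosSemidef)
    (F : (Fin n → ℝ) → EReal)
    (hne_bot : ∀ x, F x ≠ ⊥)
    (xs ys : Fin n → ℝ)
    (hproper : F xs ≠ ⊤)
    (hKKT : ∃ g : Fin n → ℝ, g + sL *ᵥ ys = 0 ∧
      ∀ x : Fin n → ℝ, F xs + ((g ⬝ᵥ (x - xs) : ℝ) : EReal) ≤ F x)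
    (hfeas : sL *ᵥ xs = 0)
    (ρ B : ℝ) (hρ : Real.sqrt (ys ⬝ᵥ ys) < ρ)
    (xh : Fin n → ℝ)
    (hbound : F xh - F xs + ((ρ * Real.sqrt ((sL *ᵥ xh) ⬝ᵥ (sL *ᵥ xh)) : ℝ) : EReal)
      ≤ (B : EReal)) :
    Real.sqrt ((sL *ᵥ xh) ⬝ᵥ (sL *ᵥ xh)) ≤ B / (ρ - Real.sqrt (ys ⬝ᵥ ys)) ∧
    ((-(Real.sqrt (ys ⬝ᵥ ys) * B / (ρ - Real.sqrt (ys ⬝ᵥ ys))) : ℝ) : EReal)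
      ≤ F xh - F xs ∧
    F xh - F xs ≤ (B : EReal) := by
  obtain ⟨g, hg, hsub⟩ := hKKT
  have hxh_top := EReal.ne_top_of_sub_add_coe_le_coe hproper hbound
  have hsymm : sL.IsSymm := isHermitian_iff_isSymm.mp hsL.isHermitian
  have hlagrangian := hsub xh
  rw [dotProduct_sub_eq_neg_dotProduct_mulVec hsymm hg hfeas] at hlagrangian
  rw [← EReal.coe_toReal hxh_top (hne_bot xh), ← EReal.coe_toReal hproper (hne_bot xs)]
    at hbound hlagrangian ⊢
  norm_cast at hbound hlagrangian ⊢
  have hcs := dotProduct_le_sqrt_mul_sqrt ys (sL *ᵥ xh)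
  exact exactPenalty_bounds (Real.sqrt_nonneg _) (Real.sqrt_nonneg _) hρ (by linarith) hbound

/-- For a proper convex `F`, a KKT pair `(x*, y*)` and `ρ > ‖y*‖`: if
`F(x̂) − F(x*) + ρ‖√L x̂‖ ≤ B` with `B ≥ 0`, then `‖√L x̂‖ ≤ B/(ρ − ‖y*‖)` and
`−‖y*‖·B/(ρ − ‖y*‖) ≤ F(x̂) − F(x*) ≤ B`. -/
theorem stmt_6 {n : ℕ} (L sL : Matrix (Fin n) (Fin n) ℝ)
    (hL : L.PosSemidef) (hsL : sL.PosSemidef) (hsq : sL * sL = L)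
    (F : (Fin n → ℝ) → EReal)
    (hne_bot : ∀ x, F x ≠ ⊥)
    (hconv : ∀ x y : Fin n → ℝ, ∀ t : ℝ, 0 ≤ t → t ≤ 1 →
      F (t • x + (1 - t) • y) ≤ (t : EReal) * F x + ((1 - t : ℝ) : EReal) * F y)
    (xs ys : Fin n → ℝ)
    (hproper : F xs ≠ ⊤)
    (hKKT : ∃ g : Fin n → ℝ, g + sL *ᵥ ys = 0 ∧
      ∀ x : Fin n → ℝ, F xs + ((g ⬝ᵥ (x - xs) : ℝ) : EReal) ≤ F x)
    (hfeas : sL *ᵥ xs = 0)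
    (ρ B : ℝ) (hB : 0 ≤ B) (hρ : Real.sqrt (ys ⬝ᵥ ys) < ρ)
    (xh : Fin n → ℝ)
    (hbound : F xh - F xs + ((ρ * Real.sqrt ((sL *ᵥ xh) ⬝ᵥ (sL *ᵥ xh)) : ℝ) : EReal)
      ≤ (B : EReal)) :
    Real.sqrt ((sL *ᵥ xh) ⬝ᵥ (sL *ᵥ xh)) ≤ B / (ρ - Real.sqrt (ys ⬝ᵥ ys)) ∧
    ((-(Real.sqrt (ys ⬝ᵥ ys) * B / (ρ - Real.sqrt (ys ⬝ᵥ ys))) : ℝ) : EReal)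
      ≤ F xh - F xs ∧
    F xh - F xs ≤ (B : EReal) :=
  stmt_6_general sL hsL F hne_bot xs ys hproper hKKT hfeas ρ B hρ xh hbound
end

section
/- Let (u_k) be a nonnegative sequence and S, B ≥ 0, and suppose u_t² ≤ S + Σ_{k=1}^{t} λ_k u_k for all t, where λ_k ≥ 0. Then u_t ≤ (1/2)Σ_{k=1}^t λ_k + ( S + ((1/2)Σ_{k=1}^t λ_k)² )^{1/2} for all t. -/
open Finset

theorem le_half_add_sqrt_of_sq_le_add_mul {x b c : ℝ} (h : x ^ 2 ≤ c + b * x) :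
    x ≤ 1 / 2 * b + √(c + (1 / 2 * b) ^ 2) := by
  have hsq : (x - 1 / 2 * b) ^ 2 ≤ c + (1 / 2 * b) ^ 2 := by linear_combination h
  linarith [Real.le_sqrt_of_sq_le hsq]

theorem sum_Icc_mul_le_sum_mul_of_le {u lam : ℕ → ℝ} (hu : ∀ k, 0 ≤ u k)
    (hlam : ∀ k, 0 ≤ lam k) {j t : ℕ} (hjt : j ≤ t) {M : ℝ} (hM : ∀ k ≤ t, u k ≤ M) :
    ∑ k ∈ Icc 1 j, lam k * u k ≤ (∑ k ∈ Icc 1 t, lam k) * M := by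
  calc ∑ k ∈ Icc 1 j, lam k * u k
      ≤ ∑ k ∈ Icc 1 t, lam k * u k :=
        sum_le_sum_of_subset_of_nonneg (Icc_subset_Icc_right hjt)
          fun k _ _ => mul_nonneg (hlam k) (hu k)
    _ ≤ ∑ k ∈ Icc 1 t, lam k * M :=
        sum_le_sum fun k hk => mul_le_mul_of_nonneg_left (hM k (mem_Icc.mp hk).2) (hlam k)
    _ = (∑ k ∈ Icc 1 t, lam k) * M := (sum_mul ..).symm

theorem stmt_10_general (u lam : ℕ → ℝ) (S : ℝ)
    (hu : ∀ t, 0 ≤ u t) (hlam : ∀ k, 0 ≤ lam k)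
    (hrec : ∀ t, (u t) ^ 2 ≤ S + ∑ k ∈ Finset.Icc 1 t, lam k * u k) :
    ∀ t, u t ≤ (1 / 2) * ∑ k ∈ Finset.Icc 1 t, lam k
      + Real.sqrt (S + ((1 / 2) * ∑ k ∈ Finset.Icc 1 t, lam k) ^ 2) := by
  intro t
  -- The bound is proved for the largest of `u 0, …, u t`, which dominates `u t`.
  obtain ⟨j, hj, hmax⟩ := exists_max_image (Iic t) u nonempty_Iic
  have hjt : j ≤ t := mem_Iic.mp hj
  have hM : ∀ k ≤ t, u k ≤ u j := fun k hk => hmax k (mem_Iic.mpr hk)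
  have hquad : u j ^ 2 ≤ S + (∑ k ∈ Icc 1 t, lam k) * u j :=
    (hrec j).trans (add_le_add_right (sum_Icc_mul_le_sum_mul_of_le hu hlam hjt hM) S)
  exact (hM t le_rfl).trans (le_half_add_sqrt_of_sq_le_add_mul hquad)

/-- Recursive inequality lemma (Schmidt et al.): if `u_t² ≤ S + Σ_{k=1}^t λ_k u_k`
with `u, λ ≥ 0` and `S ≥ 0`, then
`u_t ≤ (1/2)Σ_{k=1}^t λ_k + √(S + ((1/2)Σ_{k=1}^t λ_k)²)`. -/
theorem stmt_10 (u lam : ℕ → ℝ) (S : ℝ) (hS : 0 ≤ S)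
    (hu : ∀ t, 0 ≤ u t) (hlam : ∀ k, 0 ≤ lam k)
    (hrec : ∀ t, (u t) ^ 2 ≤ S + ∑ k ∈ Finset.Icc 1 t, lam k * u k) :
    ∀ t, u t ≤ (1 / 2) * ∑ k ∈ Finset.Icc 1 t, lam k
      + Real.sqrt (S + ((1 / 2) * ∑ k ∈ Finset.Icc 1 t, lam k) ^ 2) :=
  stmt_10_general u lam S hu hlam hrec
end

section
/- Suppose x_{k+1} is updated by the event-triggered linearized augmented Lagrangian step, so that 0 = ∇f(x_k) + ∂̃g(x_{k+1}) + z_{k+1} + P(x_{k+1} − x_k) + βL(e_k − e_{k+1}) where P = H − βL ≻ 0. Then for any x with Lx = 0 and any z ∈ span^⊥{1}: F(x_{k+1}) − F(x) + ⟨z, x_{k+1}⟩ ≤ −(1/2)‖x_{k+1} − x_k‖²_{P−L_f} − (1/2)(‖x_{k+1} − x‖²_P − ‖x_k − x‖²_P) − ⟨x_{k+1} − x, βL(e_k − e_{k+1})⟩ + ⟨e_{k+1}, z_{k+1} − z⟩ + (1/2)(‖z − z_k‖²_{(βL+11ᵀ/n)^{-1}} − ‖z − z_{k+1}‖²_{(βL+11ᵀ/n)^{-1}})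 − (1/2)‖z_{k+1} − z_k‖²_{(βL+11ᵀ/n)^{-1}}. -/
/-!
Test the optimality condition of the primal step against `x₁ - x`. Convexity of `f`, the descent
inequality and the subgradient inequality bound `F(x₁) - F(x)` by `⟨∇f(x₀) + s, x₁ - x⟩` plus
`½‖x₁ - x₀‖²_{L_f}`, and the term `⟨P(x₁ - x₀), x₁ - x⟩` splits by the three-point identity for `P`.
On a connected graph `Lx = 0` forces `x` to be constant, so `⟨z₁, x⟩ = 0`. Finally
`M = βL + 11ᵀ/n` inverts `βL` on `span⊥{1}`: against vectors orthogonal to `1`,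
`M⁻¹(z₁ - z₀) = M⁻¹ βL(x₁ + e₁)` acts like `x₁ + e₁`, and the three-point identity for `M⁻¹` turns
`⟨z - z₁, x₁ + e₁⟩` into the telescoping dual terms.
-/

open Matrix

section QuadraticForm

variable {ι R : Type*} [Fintype ι] [CommRing R] {A : Matrix ι ι R}

theorem Matrix.IsSymm.dotProduct_mulVec_comm (hA : A.IsSymm) (a b : ι → R) :
    a ⬝ᵥ (A *ᵥ b) = b ⬝ᵥ (A *ᵥ a) := by
  rw [dotProduct_mulVec, ← mulVec_transpose, hA.eq, dotProduct_comm]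

theorem Matrix.IsSymm.add_dotProduct_mulVec_add (hA : A.IsSymm) (a b : ι → R) :
    (a + b) ⬝ᵥ (A *ᵥ (a + b)) = a ⬝ᵥ (A *ᵥ a) + 2 * (a ⬝ᵥ (A *ᵥ b)) + b ⬝ᵥ (A *ᵥ b) := by
  rw [mulVec_add, dotProduct_add, add_dotProduct, add_dotProduct, hA.dotProduct_mulVec_comm b a]
  ring

theorem Matrix.IsSymm.two_mul_mulVec_sub_dotProduct_sub (hA : A.IsSymm) (u v w : ι → R) :
    2 * ((A *ᵥ (u - v)) ⬝ᵥ (u - w)) =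
      (u - w) ⬝ᵥ (A *ᵥ (u - w)) - (v - w) ⬝ᵥ (A *ᵥ (v - w)) + (u - v) ⬝ᵥ (A *ᵥ (u - v)) := by
  have h := hA.add_dotProduct_mulVec_add (v - w) (u - v)
  rw [sub_add_sub_cancel'] at h
  rw [h, dotProduct_comm, ← sub_add_sub_cancel' v w u, add_dotProduct]
  ring

theorem dotProduct_const_eq_zero {u : ι → R} (hu : u ⬝ᵥ (fun _ => 1) = 0) (c : R) :
    u ⬝ᵥ (fun _ => c) = 0 := by
  simpa [dotProduct, Finset.sum_mul] using congrArg (· * c) hu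

theorem of_const_one_mulVec (v : ι → R) :
    (Matrix.of (fun _ _ => (1 : R)) : Matrix ι ι R) *ᵥ v = fun _ => ∑ i, v i := by
  ext; simp [mulVec, dotProduct]

end QuadraticForm

theorem add_sub_add_le_of_descent_of_subgradient {ι : Type*} [Fintype ι]
    {f g : (ι → ℝ) → ℝ} {D : Matrix ι ι ℝ} {x₀ x₁ x d s : ι → ℝ}
    (hdesc : f x₁ ≤ f x₀ + d ⬝ᵥ (x₁ - x₀) + (1 / 2) * ((x₁ - x₀) ⬝ᵥ (D *ᵥ (x₁ - x₀))))
    (hconv : f x₀ + d ⬝ᵥ (x - x₀) ≤ f x) (hs : g x₁ + s ⬝ᵥ (x - x₁) ≤ g x) :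
    f x₁ + g x₁ - (f x + g x) ≤
      (d + s) ⬝ᵥ (x₁ - x) + (1 / 2) * ((x₁ - x₀) ⬝ᵥ (D *ᵥ (x₁ - x₀))) := by
  have hd : d ⬝ᵥ (x₁ - x₀) - d ⬝ᵥ (x - x₀) = d ⬝ᵥ (x₁ - x) := by
    rw [← dotProduct_sub, sub_sub_sub_cancel_right]
  have hs' : s ⬝ᵥ (x - x₁) = -(s ⬝ᵥ (x₁ - x)) := by rw [← dotProduct_neg, neg_sub]
  rw [add_dotProduct]
  linarith

namespace SimpleGraph

variable {V : Type*} [Fintype V] [DecidableEq V] {G : SimpleGraph V} [DecidableRel G.Adj]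

variable (G) in
theorem lapMatrix_mulVec_dotProduct_const_eq_zero {R : Type*} [CommRing R] (w : V → R) :
    (G.lapMatrix R *ᵥ w) ⬝ᵥ (fun _ => 1) = 0 := by
  rw [dotProduct_comm, (G.isSymm_lapMatrix (R := R)).dotProduct_mulVec_comm,
    lapMatrix_mulVec_const_eq_zero, dotProduct_zero]

theorem Connected.eq_const_of_lapMatrix_mulVec_eq_zero (hG : G.Connected) {x : V → ℝ}
    (hx : G.lapMatrix ℝ *ᵥ x = 0) (i : V) : x = fun _ => x i :=
  funext fun j => G.lapMatrix_mulVec_eq_zero_iff_forall_reachable.mp hx j i (hG.preconnected j i)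

theorem Connected.dotProduct_eq_zero_of_lapMatrix_mulVec_eq_zero (hG : G.Connected) {x z : V → ℝ}
    (hz : z ⬝ᵥ (fun _ => 1) = 0) (hx : G.lapMatrix ℝ *ᵥ x = 0) : z ⬝ᵥ x = 0 := by
  obtain ⟨i⟩ := hG.nonempty
  rw [hG.eq_const_of_lapMatrix_mulVec_eq_zero hx i]
  exact dotProduct_const_eq_zero hz _

theorem Connected.posDef_smul_lapMatrix_add_smul_ones (hG : G.Connected) {β c : ℝ}
    (hβ : 0 < β) (hc : 0 < c) :
    (β • G.lapMatrix ℝ + c • Matrix.of (fun _ _ => (1 : ℝ))).PosDef := by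
  have hL := posSemidef_lapMatrix ℝ G
  refine .of_dotProduct_mulVec_pos ?_ fun v hv => ?_
  · rw [isHermitian_iff_isSymm]
    exact ((G.isSymm_lapMatrix (R := ℝ)).smul β).add ((IsSymm.ext fun _ _ => rfl).smul c)
  have hq : star v ⬝ᵥ ((β • G.lapMatrix ℝ + c • Matrix.of (fun _ _ => (1 : ℝ))) *ᵥ v) =
      β * (star v ⬝ᵥ (G.lapMatrix ℝ *ᵥ v)) + c * (∑ i, v i) ^ 2 := by
    rw [add_mulVec, smul_mulVec, smul_mulVec, of_const_one_mulVec, dotProduct_add, dotProduct_smul,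
      dotProduct_smul, smul_eq_mul, smul_eq_mul, star_trivial]
    simp [dotProduct, Finset.sum_mul, sq]
  rw [hq]
  rcases (hL.dotProduct_mulVec_nonneg v).lt_or_eq with hpos | hzero
  · exact add_pos_of_pos_of_nonneg (mul_pos hβ hpos) (by positivity)
  obtain ⟨i⟩ := hG.nonempty
  have hconst := hG.eq_const_of_lapMatrix_mulVec_eq_zero
    ((hL.dotProduct_mulVec_zero_iff v).mp hzero.symm) i
  have hvi : v i ≠ 0 := fun h => hv (by rw [hconst, h]; rfl)
  have hsum : ∑ j, v j = Fintype.card V * v i := by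
    rw [hconst]; simp
  rw [← hzero, hsum]
  have : (0 : ℝ) < Fintype.card V := by exact_mod_cast Fintype.card_pos_iff.mpr hG.nonempty
  positivity

theorem Connected.dotProduct_inv_mulVec_smul_lapMatrix_mulVec (hG : G.Connected) {β c : ℝ}
    (hβ : 0 < β) (hc : 0 < c) {y : V → ℝ} (hy : y ⬝ᵥ (fun _ => 1) = 0) (w : V → ℝ) :
    y ⬝ᵥ ((β • G.lapMatrix ℝ + c • Matrix.of (fun _ _ => (1 : ℝ)))⁻¹ *ᵥ
      (β • (G.lapMatrix ℝ *ᵥ w))) = y ⬝ᵥ w := by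
  set M := β • G.lapMatrix ℝ + c • Matrix.of (fun _ _ => (1 : ℝ))
  have hM : IsUnit M.det := (hG.posDef_smul_lapMatrix_add_smul_ones hβ hc).det_pos.ne'.isUnit
  have := hG.nonempty
  have hcard : (Fintype.card V : ℝ) ≠ 0 := Nat.cast_ne_zero.mpr Fintype.card_ne_zero
  set a := (∑ j, w j) / Fintype.card V
  have hLa : G.lapMatrix ℝ *ᵥ (fun _ => a) = 0 :=
    G.lapMatrix_mulVec_eq_zero_iff_forall_adj.mpr fun _ _ _ => rfl
  set v := w - fun _ => a
  have hsum : ∑ j, v j = 0 := by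
    simp [v, a, Finset.sum_sub_distrib, mul_div_cancel₀ _ hcard]
  have hMv : M *ᵥ v = β • (G.lapMatrix ℝ *ᵥ w) := by
    rw [add_mulVec, smul_mulVec, smul_mulVec, of_const_one_mulVec, hsum, mulVec_sub, hLa]
    simp [← Pi.zero_def]
  rw [← hMv, mulVec_mulVec, nonsing_inv_mul _ hM, one_mulVec, dotProduct_sub,
    dotProduct_const_eq_zero hy, sub_zero]

theorem Connected.dual_three_point_identity (hG : G.Connected) {β c : ℝ} (hβ : 0 < β)
    (hc : 0 < c)    {z z₀ z₁ w : V → ℝ} (hz : z ⬝ᵥ (fun _ => 1) = 0) (hz₁ : z₁ ⬝ᵥ (fun _ => 1) = 0)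
    (hzw : z₁ = z₀ + β • (G.lapMatrix ℝ *ᵥ w)) :
    (z - z₀) ⬝ᵥ ((β • G.lapMatrix ℝ + c • Matrix.of (fun _ _ => (1 : ℝ)))⁻¹ *ᵥ (z - z₀))
      - (z - z₁) ⬝ᵥ ((β • G.lapMatrix ℝ + c • Matrix.of (fun _ _ => (1 : ℝ)))⁻¹ *ᵥ (z - z₁))
      - (z₁ - z₀) ⬝ᵥ ((β • G.lapMatrix ℝ + c • Matrix.of (fun _ _ => (1 : ℝ)))⁻¹ *ᵥ (z₁ - z₀))
      = 2 * ((z - z₁) ⬝ᵥ w) := by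
  have hM := isHermitian_iff_isSymm.mp (hG.posDef_smul_lapMatrix_add_smul_ones hβ hc).isHermitian
  have h := hM.inv.add_dotProduct_mulVec_add (z - z₁) (z₁ - z₀)
  rw [sub_add_sub_cancel] at h
  rw [h, show z₁ - z₀ = β • (G.lapMatrix ℝ *ᵥ w) by rw [hzw, add_sub_cancel_left],
    hG.dotProduct_inv_mulVec_smul_lapMatrix_mulVec hβ hc
      (by rw [sub_dotProduct, hz, hz₁, sub_zero])]
  ring

end SimpleGraph

theorem stmt_14_general {n : ℕ} (G : SimpleGraph (Fin n)) [DecidableRel G.Adj]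
    (hG : G.Connected) (β : ℝ) (hβ : 0 < β)
    (η lf : Fin n → ℝ)
    (f gC : (Fin n → ℝ) → ℝ) (gradf : (Fin n → ℝ) → (Fin n → ℝ))
    -- smoothness (descent lemma) for f with modulus L_f
    (hdesc : ∀ u v : Fin n → ℝ, f v ≤ f u + gradf u ⬝ᵥ (v - u)
      + (1 / 2) * ((v - u) ⬝ᵥ (Matrix.diagonal lf *ᵥ (v - u))))
    -- convexity of f
    (hconvf : ∀ u v : Fin n → ℝ, f u + gradf u ⬝ᵥ (v - u) ≤ f v)
    (x₀ x₁ z₀ z₁ e₀ e₁ : Fin n → ℝ) (sg : Fin n → ℝ)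
    -- sg is a subgradient of the convex function gC at x₁
    (hsg : ∀ y : Fin n → ℝ, gC x₁ + sg ⬝ᵥ (y - x₁) ≤ gC y)
    -- optimality condition of the primal update
    (hopt : gradf x₀ + sg + z₁ + (Matrix.diagonal η - β • G.lapMatrix ℝ) *ᵥ (x₁ - x₀)
      + β • (G.lapMatrix ℝ *ᵥ (e₀ - e₁)) = 0)
    -- dual variable lies in span⊥{1} and follows the dual update
    (hz₀ : z₀ ⬝ᵥ (fun _ => (1 : ℝ)) = 0)
    (hzup : z₁ = z₀ + β • (G.lapMatrix ℝ *ᵥ (x₁ + e₁))) :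
    ∀ x z : Fin n → ℝ, G.lapMatrix ℝ *ᵥ x = 0 → z ⬝ᵥ (fun _ => (1 : ℝ)) = 0 →
      (f x₁ + gC x₁) - (f x + gC x) + z ⬝ᵥ x₁ ≤
        -(1 / 2) * ((x₁ - x₀) ⬝ᵥ
            ((Matrix.diagonal η - β • G.lapMatrix ℝ - Matrix.diagonal lf) *ᵥ (x₁ - x₀)))
        - (1 / 2) * ((x₁ - x) ⬝ᵥ ((Matrix.diagonal η - β • G.lapMatrix ℝ) *ᵥ (x₁ - x))
            - (x₀ - x) ⬝ᵥ ((Matrix.diagonal η - β • G.lapMatrix ℝ) *ᵥ (x₀ - x)))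
        - (x₁ - x) ⬝ᵥ (β • (G.lapMatrix ℝ *ᵥ (e₀ - e₁)))
        + e₁ ⬝ᵥ (z₁ - z)
        + (1 / 2) * ((z - z₀) ⬝ᵥ
              ((β • G.lapMatrix ℝ + ((n : ℝ)⁻¹) • Matrix.of (fun _ _ => (1 : ℝ)))⁻¹ *ᵥ (z - z₀))
            - (z - z₁) ⬝ᵥ
              ((β • G.lapMatrix ℝ + ((n : ℝ)⁻¹) • Matrix.of (fun _ _ => (1 : ℝ)))⁻¹ *ᵥ (z - z₁)))
        - (1 / 2) * ((z₁ - z₀) ⬝ᵥ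
            ((β • G.lapMatrix ℝ + ((n : ℝ)⁻¹) • Matrix.of (fun _ _ => (1 : ℝ)))⁻¹ *ᵥ (z₁ - z₀))) := by
  intro x z hx hz
  set L := G.lapMatrix ℝ
  set P := Matrix.diagonal η - β • L
  have hn : (0 : ℝ) < (n : ℝ)⁻¹ :=
    inv_pos.mpr (Nat.cast_pos.mpr (Fin.pos_iff_nonempty.mpr hG.nonempty))
  have hF := add_sub_add_le_of_descent_of_subgradient (hdesc x₀ x₁) (hconvf x₀ x) (hsg x)
  have hopt' := congrArg (· ⬝ᵥ (x₁ - x)) hopt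
  rw [add_dotProduct, add_dotProduct, add_dotProduct, zero_dotProduct,
    dotProduct_comm (β • (L *ᵥ (e₀ - e₁)))] at hopt'
  have hz₁ : z₁ ⬝ᵥ (fun _ => (1 : ℝ)) = 0 := by
    rw [hzup, add_dotProduct, hz₀, smul_dotProduct, G.lapMatrix_mulVec_dotProduct_const_eq_zero,
      smul_zero, zero_add]
  have hz₁x := hG.dotProduct_eq_zero_of_lapMatrix_mulVec_eq_zero hz₁ hx
  have hP : P.IsSymm := (isSymm_diagonal η).sub ((G.isSymm_lapMatrix (R := ℝ)).smul β)
  have hprimal := hP.two_mul_mulVec_sub_dotProduct_sub x₁ x₀ x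
  have hdual := hG.dual_three_point_identity hβ hn hz hz₁ hzup
  have hPLf : (x₁ - x₀) ⬝ᵥ ((P - Matrix.diagonal lf) *ᵥ (x₁ - x₀)) =
      (x₁ - x₀) ⬝ᵥ (P *ᵥ (x₁ - x₀)) - (x₁ - x₀) ⬝ᵥ (Matrix.diagonal lf *ᵥ (x₁ - x₀)) := by
    rw [sub_mulVec, dotProduct_sub]
  have hz₁x₁ : z₁ ⬝ᵥ (x₁ - x) = z₁ ⬝ᵥ x₁ := by rw [dotProduct_sub, hz₁x, sub_zero]
  have hzx₁ : (z - z₁) ⬝ᵥ (x₁ + e₁) = z ⬝ᵥ x₁ - z₁ ⬝ᵥ x₁ - e₁ ⬝ᵥ (z₁ - z) := by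
    rw [dotProduct_comm e₁]
    simp only [dotProduct_add, sub_dotProduct]
    ring
  linarith

/-- One-step inequality for the event-triggered linearized augmented Lagrangian
method (Lemma 3 of the paper). -/
theorem stmt_14 {n : ℕ} (G : SimpleGraph (Fin n)) [DecidableRel G.Adj]
    (hG : G.Connected) (β : ℝ) (hβ : 0 < β)
    (η lf : Fin n → ℝ) (hη : ∀ i, 0 < η i) (hlf : ∀ i, 0 ≤ lf i)
    -- P = H − βL ≻ 0 and P ≻ L_f
    (hP : (Matrix.diagonal η - β • G.lapMatrix ℝ).PosDef)
    (hPLf : (Matrix.diagonal η - β • G.lapMatrix ℝ - Matrix.diagonal lf).PosDef)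
    (f gC : (Fin n → ℝ) → ℝ) (gradf : (Fin n → ℝ) → (Fin n → ℝ))
    -- smoothness (descent lemma) for f with modulus L_f
    (hdesc : ∀ u v : Fin n → ℝ, f v ≤ f u + gradf u ⬝ᵥ (v - u)
      + (1 / 2) * ((v - u) ⬝ᵥ (Matrix.diagonal lf *ᵥ (v - u))))
    -- convexity of f
    (hconvf : ∀ u v : Fin n → ℝ, f u + gradf u ⬝ᵥ (v - u) ≤ f v)
    (x₀ x₁ z₀ z₁ e₀ e₁ : Fin n → ℝ) (sg : Fin n → ℝ)
    -- sg is a subgradient of the convex function gC at x₁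
    (hsg : ∀ y : Fin n → ℝ, gC x₁ + sg ⬝ᵥ (y - x₁) ≤ gC y)
    -- optimality condition of the primal update
    (hopt : gradf x₀ + sg + z₁ + (Matrix.diagonal η - β • G.lapMatrix ℝ) *ᵥ (x₁ - x₀)
      + β • (G.lapMatrix ℝ *ᵥ (e₀ - e₁)) = 0)
    -- dual variable lies in span⊥{1} and follows the dual update
    (hz₀ : z₀ ⬝ᵥ (fun _ => (1 : ℝ)) = 0)
    (hzup : z₁ = z₀ + β • (G.lapMatrix ℝ *ᵥ (x₁ + e₁))) :
    ∀ x z : Fin n → ℝ, G.lapMatrix ℝ *ᵥ x = 0 → z ⬝ᵥ (fun _ => (1 : ℝ)) = 0 →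
      (f x₁ + gC x₁) - (f x + gC x) + z ⬝ᵥ x₁ ≤
        -(1 / 2) * ((x₁ - x₀) ⬝ᵥ
            ((Matrix.diagonal η - β • G.lapMatrix ℝ - Matrix.diagonal lf) *ᵥ (x₁ - x₀)))
        - (1 / 2) * ((x₁ - x) ⬝ᵥ ((Matrix.diagonal η - β • G.lapMatrix ℝ) *ᵥ (x₁ - x))
            - (x₀ - x) ⬝ᵥ ((Matrix.diagonal η - β • G.lapMatrix ℝ) *ᵥ (x₀ - x)))
        - (x₁ - x) ⬝ᵥ (β • (G.lapMatrix ℝ *ᵥ (e₀ - e₁)))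
        + e₁ ⬝ᵥ (z₁ - z)
        + (1 / 2) * ((z - z₀) ⬝ᵥ
              ((β • G.lapMatrix ℝ + ((n : ℝ)⁻¹) • Matrix.of (fun _ _ => (1 : ℝ)))⁻¹ *ᵥ (z - z₀))
            - (z - z₁) ⬝ᵥ
              ((β • G.lapMatrix ℝ + ((n : ℝ)⁻¹) • Matrix.of (fun _ _ => (1 : ℝ)))⁻¹ *ᵥ (z - z₁)))
        - (1 / 2) * ((z₁ - z₀) ⬝ᵥ
            ((β • G.lapMatrix ℝ + ((n : ℝ)⁻¹) • Matrix.of (fun _ _ => (1 : ℝ)))⁻¹ *ᵥ (z₁ - z₀))) :=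
  stmt_14_general G hG β hβ η lf f gC gradf hdesc hconvf x₀ x₁ z₀ z₁ e₀ e₁ sg hsg hopt hz₀ hzup
end

section
/- Let P ≻ 0, Q ⪰ 0 symmetric, and suppose real numbers σ, k_5 > 0, 0 < k_4 < 1, k_2 > 0, k_3 > 2 satisfy: (σ+k_5)(k_2+k_3−1)L_f² ⪯ k_4 Q (1−2/k_3) λ_min(βL+11ᵀ/n), (σ+k_5)P² ⪯ (P − L_f²/k_1)(1−2/k_3)λ_min(βL+11ᵀ/n), and (σ+k_5)(P + k_4 Q) ⪯ (1−k_4)Q. If additionally ‖P(x_{k+1}−x_k)‖² ≥ (1−k_2−k_3)‖x_k−x*‖²_{L_f²} + (1−2/k_3)‖z_{k+1}−z*‖² + (1−1/k_2−k_3)‖βL(e_k−e_{k+1})‖², then (1/2)‖x_{k+1}−x*‖²_{(1−k_4)Q} + (1/2)‖x_{k+1}−x_k‖²_{P−L_f²/k_1} + (1/2)‖x_k−x*‖²_{k_4 Q} + (1/2)‖z_k−z_{k+1}‖²_{(βL+11ᵀ/n)^{-1}} + ((k_3+1/k_2−1)(σ+k_5)/(2(1−2/k_3)λ_min(βL+11ᵀ/n)))‖βL(e_k−e_{k+1})‖²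 ≥ ((σ+k_5)/2)(‖x_{k+1}−x*‖²_{P+k_4Q} + ‖z_{k+1}−z*‖²_{(βL+11ᵀ/n)^{-1}}). -/
/-!
Everything reduces to scalar inequalities between quadratic forms. The primal terms at
`x_{k+1} - x*` are the third matrix inequality, and the `M⁻¹`-term at `z_k - z_{k+1}` is
nonnegative, where `M = βL + 11ᵀ/n`. For the dual term, `λ_min` is the smallest eigenvalue of `M`, so
`M⁻¹ ⪯ λ_min⁻¹ I`. The assumed lower bound on `‖P(x_{k+1} - x_k)‖²` then bounds
`(1 - 2/k₃) λ_min ‖z_{k+1} - z*‖²_{M⁻¹}` by `‖x_{k+1} - x_k‖²_{P²}`, `‖x_k - x*‖²_{L_f²}` and the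
triggering error. The first two matrix inequalities convert these into the `P - L_f²/k₁` and `k₄Q`
terms of the left-hand side.
-/

open Matrix
open scoped MatrixOrder

/-- The matrix `βL + 11ᵀ/n` appearing in the dual weighting. -/
noncomputable def Mmat {n : ℕ} (G : SimpleGraph (Fin n)) [DecidableRel G.Adj]
    (β : ℝ) : Matrix (Fin n) (Fin n) ℝ :=
  β • G.lapMatrix ℝ + ((n : ℝ)⁻¹) • Matrix.of (fun _ _ => (1 : ℝ))

namespace Matrix

variable {n : Type*} [Fintype n]

theorem dotProduct_mulVec_le_of_posSemidef_sub {A B : Matrix n n ℝ} (h : (A - B).PosSemidef)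
    (x : n → ℝ) : x ⬝ᵥ B *ᵥ x ≤ x ⬝ᵥ A *ᵥ x := by
  have := h.dotProduct_mulVec_nonneg x
  rw [star_trivial, sub_mulVec, dotProduct_sub] at this
  linarith

theorem mulVec_dotProduct_mulVec_self {m R : Type*} [Fintype m] [CommSemiring R]
    (A : Matrix m n R) (x : n → R) : (A *ᵥ x) ⬝ᵥ (A *ᵥ x) = x ⬝ᵥ (Aᵀ * A) *ᵥ x := by
  rw [← mulVec_mulVec, dotProduct_mulVec x Aᵀ, vecMul_transpose]

variable [DecidableEq n]

theorem IsHermitian.inv_le_algebraMap_of_le_eigenvalues {M : Matrix n n ℝ} (hM : M.IsHermitian)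
    {lam : ℝ} (hlam : 0 < lam) (hle : ∀ i, lam ≤ hM.eigenvalues i) :
    M⁻¹ ≤ algebraMap ℝ _ lam⁻¹ := by
  have hspec : ∀ x ∈ spectrum ℝ M, lam ≤ x := by
    rw [hM.spectrum_real_eq_range_eigenvalues]
    rintro _ ⟨i, rfl⟩
    exact hle i
  have hspec_ne : ∀ x ∈ spectrum ℝ M, x ≠ 0 := fun x hx => (hlam.trans_le (hspec x hx)).ne'
  have hunit : IsUnit M := (spectrum.zero_notMem_iff ℝ).mp fun h0 => hspec_ne 0 h0 rfl
  rw [nonsing_inv_eq_ringInverse, ← cfc_ringInverse_id (R := ℝ) (a := M) hunit hM.isSelfAdjoint]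
  exact cfc_le_algebraMap _ _ _ (fun x hx => inv_anti₀ hlam (hspec x hx))
    (continuousOn_inv₀.mono hspec_ne) hM.isSelfAdjoint

theorem IsHermitian.dotProduct_mulVec_inv_le {M : Matrix n n ℝ} (hM : M.IsHermitian) {lam : ℝ}
    (hlam : 0 < lam) (hle : ∀ i, lam ≤ hM.eigenvalues i) (v : n → ℝ) :
    v ⬝ᵥ M⁻¹ *ᵥ v ≤ lam⁻¹ * (v ⬝ᵥ v) := by
  simpa only [Algebra.algebraMap_eq_smul_one, smul_mulVec, one_mulVec, dotProduct_smul,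
    smul_eq_mul] using
    dotProduct_mulVec_le_of_posSemidef_sub (hM.inv_le_algebraMap_of_le_eigenvalues hlam hle) v

end Matrix

theorem dual_term_le {s c lam Zi Z Pp F E Er R k₂ k₃ k₄ : ℝ} (hs : 0 < s) (hc : 0 < c)
    (hlam : 0 < lam) (hZi : Zi ≤ lam⁻¹ * Z)
    (hkey : (1 - k₂ - k₃) * F + c * Z + (1 - 1 / k₂ - k₃) * Er ≤ Pp)
    (h1 : s * (k₂ + k₃ - 1) * F ≤ k₄ * c * lam * E) (h2 : s * Pp ≤ c * lam * R) :
    s * Zi ≤ R + k₄ * E + (k₃ + 1 / k₂ - 1) * s / (c * lam) * Er := by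
  have hZ : c * lam * Zi ≤ c * Z :=
    calc c * lam * Zi ≤ c * lam * (lam⁻¹ * Z) := by gcongr
      _ = c * Z := by field_simp
  refine le_of_mul_le_mul_left ?_ (mul_pos hc hlam)
  calc c * lam * (s * Zi) = s * (c * lam * Zi) := by ring
    _ ≤ s * (c * Z) := by gcongr
    _ ≤ s * (Pp + (k₂ + k₃ - 1) * F + (k₃ + 1 / k₂ - 1) * Er) := by gcongr; linarith
    _ ≤ c * lam * (R + k₄ * E) + (k₃ + 1 / k₂ - 1) * s * Er := by linarith
    _ = c * lam * (R + k₄ * E + (k₃ + 1 / k₂ - 1) * s / (c * lam) * Er) := by field_simp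

theorem stmt_16_general {n : ℕ} (G : SimpleGraph (Fin n)) [DecidableRel G.Adj]
    (β : ℝ)
    (P Q Lf : Matrix (Fin n) (Fin n) ℝ)
    (hP : P.PosDef)
    (hMM : (Mmat G β).PosDef) (hHerm : (Mmat G β).IsHermitian)
    (lam : ℝ)
    -- lam is the smallest eigenvalue of βL + 11ᵀ/n
    (hlam : IsLeast (Set.range hHerm.eigenvalues) lam)
    (σ k₁ k₂ k₃ k₄ k₅ : ℝ)
    (hσ : 0 < σ) (hk₃ : 2 < k₃)
    (hk₅ : 0 < k₅)
    -- (σ+k₅)(k₂+k₃−1)L_f² ⪯ k₄Q(1−2/k₃)λ_min(βL+11ᵀ/n)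
    (h1 : ((k₄ * (1 - 2 / k₃) * lam) • Q - ((σ + k₅) * (k₂ + k₃ - 1)) • (Lf * Lf)).PosSemidef)
    -- (σ+k₅)P² ⪯ (P − L_f²/k₁)(1−2/k₃)λ_min(βL+11ᵀ/n)
    (h2 : (((1 - 2 / k₃) * lam) • (P - k₁⁻¹ • (Lf * Lf)) - (σ + k₅) • (P * P)).PosSemidef)
    -- (σ+k₅)(P + k₄Q) ⪯ (1−k₄)Q
    (h3 : ((1 - k₄) • Q - (σ + k₅) • (P + k₄ • Q)).PosSemidef)
    (x₀ x₁ xs z₀ z₁ zs e₀ e₁ : Fin n → ℝ)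
    -- lower bound on ‖P(x_{k+1}−x_k)‖²
    (hkey : (P *ᵥ (x₁ - x₀)) ⬝ᵥ (P *ᵥ (x₁ - x₀)) ≥
      (1 - k₂ - k₃) * ((x₀ - xs) ⬝ᵥ ((Lf * Lf) *ᵥ (x₀ - xs)))
      + (1 - 2 / k₃) * ((z₁ - zs) ⬝ᵥ (z₁ - zs))
      + (1 - 1 / k₂ - k₃) *
          ((β • (G.lapMatrix ℝ *ᵥ (e₀ - e₁))) ⬝ᵥ (β • (G.lapMatrix ℝ *ᵥ (e₀ - e₁))))) :
    (1 / 2) * ((x₁ - xs) ⬝ᵥ (((1 - k₄) • Q) *ᵥ (x₁ - xs)))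
    + (1 / 2) * ((x₁ - x₀) ⬝ᵥ ((P - k₁⁻¹ • (Lf * Lf)) *ᵥ (x₁ - x₀)))
    + (1 / 2) * ((x₀ - xs) ⬝ᵥ ((k₄ • Q) *ᵥ (x₀ - xs)))
    + (1 / 2) * ((z₀ - z₁) ⬝ᵥ ((Mmat G β)⁻¹ *ᵥ (z₀ - z₁)))
    + ((k₃ + 1 / k₂ - 1) * (σ + k₅) / (2 * (1 - 2 / k₃) * lam)) *
        ((β • (G.lapMatrix ℝ *ᵥ (e₀ - e₁))) ⬝ᵥ (β • (G.lapMatrix ℝ *ᵥ (e₀ - e₁))))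
    ≥ ((σ + k₅) / 2) *
        ((x₁ - xs) ⬝ᵥ ((P + k₄ • Q) *ᵥ (x₁ - xs))
          + (z₁ - zs) ⬝ᵥ ((Mmat G β)⁻¹ *ᵥ (z₁ - zs))) := by
  have hs : 0 < σ + k₅ := add_pos hσ hk₅
  have hc : 0 < 1 - 2 / k₃ := by rw [sub_pos, div_lt_one (by linarith)]; exact hk₃
  obtain ⟨⟨i, rfl⟩, hle⟩ := hlam
  have hlam : 0 < hHerm.eigenvalues i := hMM.eigenvalues_pos i
  have hZ := hHerm.dotProduct_mulVec_inv_le hlam (fun j => hle ⟨j, rfl⟩) (z₁ - zs)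
  have hW := hMM.inv.posSemidef.dotProduct_mulVec_nonneg (z₀ - z₁)
  rw [star_trivial] at hW
  have q1 := dotProduct_mulVec_le_of_posSemidef_sub h1 (x₀ - xs)
  have q2 := dotProduct_mulVec_le_of_posSemidef_sub h2 (x₁ - x₀)
  have q3 := dotProduct_mulVec_le_of_posSemidef_sub h3 (x₁ - xs)
  rw [mulVec_dotProduct_mulVec_self, (isHermitian_iff_isSymm.mp hP.isHermitian).eq] at hkey
  set Er := (β • (G.lapMatrix ℝ *ᵥ (e₀ - e₁))) ⬝ᵥ (β • (G.lapMatrix ℝ *ᵥ (e₀ - e₁)))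
  simp only [smul_mulVec, sub_mulVec, add_mulVec, dotProduct_smul, dotProduct_sub,
    dotProduct_add, smul_eq_mul] at q1 q2 q3 ⊢
  have hdual := dual_term_le hs hc hlam hZ hkey q1 q2
  rw [mul_assoc 2, div_mul_eq_div_div_swap]
  linarith

/-- Key inequality establishing linear convergence (derivation of Theorem 2). -/
theorem stmt_16 {n : ℕ} (G : SimpleGraph (Fin n)) [DecidableRel G.Adj]
    (hG : G.Connected) (β : ℝ) (hβ : 0 < β)
    (P Q Lf : Matrix (Fin n) (Fin n) ℝ)
    (hP : P.PosDef) (hQsymm : Q.IsHermitian) (hQ : Q.PosSemidef)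
    (hMM : (Mmat G β).PosDef) (hHerm : (Mmat G β).IsHermitian)
    (lam : ℝ)
    -- lam is the smallest eigenvalue of βL + 11ᵀ/n
    (hlam : IsLeast (Set.range hHerm.eigenvalues) lam)
    (σ k₁ k₂ k₃ k₄ k₅ : ℝ)
    (hσ : 0 < σ) (hk₁ : 0 < k₁) (hk₂ : 0 < k₂) (hk₃ : 2 < k₃)
    (hk₄ : 0 < k₄) (hk₄' : k₄ < 1) (hk₅ : 0 < k₅)
    -- (σ+k₅)(k₂+k₃−1)L_f² ⪯ k₄Q(1−2/k₃)λ_min(βL+11ᵀ/n)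
    (h1 : ((k₄ * (1 - 2 / k₃) * lam) • Q - ((σ + k₅) * (k₂ + k₃ - 1)) • (Lf * Lf)).PosSemidef)
    -- (σ+k₅)P² ⪯ (P − L_f²/k₁)(1−2/k₃)λ_min(βL+11ᵀ/n)
    (h2 : (((1 - 2 / k₃) * lam) • (P - k₁⁻¹ • (Lf * Lf)) - (σ + k₅) • (P * P)).PosSemidef)
    -- (σ+k₅)(P + k₄Q) ⪯ (1−k₄)Q
    (h3 : ((1 - k₄) • Q - (σ + k₅) • (P + k₄ • Q)).PosSemidef)
    (x₀ x₁ xs z₀ z₁ zs e₀ e₁ : Fin n → ℝ)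
    -- lower bound on ‖P(x_{k+1}−x_k)‖²
    (hkey : (P *ᵥ (x₁ - x₀)) ⬝ᵥ (P *ᵥ (x₁ - x₀)) ≥
      (1 - k₂ - k₃) * ((x₀ - xs) ⬝ᵥ ((Lf * Lf) *ᵥ (x₀ - xs)))
      + (1 - 2 / k₃) * ((z₁ - zs) ⬝ᵥ (z₁ - zs))
      + (1 - 1 / k₂ - k₃) *
          ((β • (G.lapMatrix ℝ *ᵥ (e₀ - e₁))) ⬝ᵥ (β • (G.lapMatrix ℝ *ᵥ (e₀ - e₁))))) :
    (1 / 2) * ((x₁ - xs) ⬝ᵥ (((1 - k₄) • Q) *ᵥ (x₁ - xs)))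
    + (1 / 2) * ((x₁ - x₀) ⬝ᵥ ((P - k₁⁻¹ • (Lf * Lf)) *ᵥ (x₁ - x₀)))
    + (1 / 2) * ((x₀ - xs) ⬝ᵥ ((k₄ • Q) *ᵥ (x₀ - xs)))
    + (1 / 2) * ((z₀ - z₁) ⬝ᵥ ((Mmat G β)⁻¹ *ᵥ (z₀ - z₁)))
    + ((k₃ + 1 / k₂ - 1) * (σ + k₅) / (2 * (1 - 2 / k₃) * lam)) *
        ((β • (G.lapMatrix ℝ *ᵥ (e₀ - e₁))) ⬝ᵥ (β • (G.lapMatrix ℝ *ᵥ (e₀ - e₁))))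
    ≥ ((σ + k₅) / 2) *
        ((x₁ - xs) ⬝ᵥ ((P + k₄ • Q) *ᵥ (x₁ - xs))
          + (z₁ - zs) ⬝ᵥ ((Mmat G β)⁻¹ *ᵥ (z₁ - zs))) :=
  stmt_16_general G β P Q Lf hP hMM hHerm lam hlam σ k₁ k₂ k₃ k₄ k₅ hσ hk₃ hk₅ h1 h2 h3 x₀ x₁ xs z₀
    z₁ zs e₀ e₁ hkey
end
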